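/- Let f(r) = 4 − 3r − √(9r² − 15r + 7) and Δ = {(r, t, y) ∈ ℝ³ : 0 ≤ r ≤ 1, 0 ≤ t ≤ f(r), 0 ≤ y ≤ 24 − 18r − 6t}. Then Δ is not the convex hull of any finite subset of ℝ³; in particular Δ is a compact convex body that is not a polytope. -/

import Mathlib

/-!
Write `f r = 4 - 3r - √(9r² - 15r + 7)` (here `tBound`). The radicand has positive leading
coefficient and negative discriminant, so by Cauchy–Schwarz for the positive definite form
`(x, 1) ↦ 9x² - 15x + 7` its square root is strictly convex; hence `f` is strictly concave and `Δ`
is a compact convex set. Strict concavity makes every `(r, f r)` an extreme point of the hypograph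
of `f`. The shear `(r, t, y) ↦ (r, t - y)` maps `Δ` into that hypograph, and `(r, f r, 0)` is the
only point of `Δ` over `(r, f r)`, so it is an extreme point of `Δ` for every `r ∈ [0, 1]`. The
convex hull of a finite set has only finitely many extreme points.
-/

open Set

section SqrtQuadratic

variable {a b c : ℝ}

theorem quadratic_nonneg_of_discrim_neg (ha : 0 < a) (hdisc : discrim a b c < 0) (x : ℝ) :
    0 ≤ a * x ^ 2 + b * x + c := by
  rw [discrim] at hdisc
  nlinarith [sq_nonneg (2 * a * x + b)]

theorem mul_add_lt_sqrt_mul_sqrt_of_discrim_neg (ha : 0 < a) (hdisc : discrim a b c < 0)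
    {x y : ℝ} (hxy : x ≠ y) :
    a * x * y + b * (x + y) / 2 + c <
      √(a * x ^ 2 + b * x + c) * √(a * y ^ 2 + b * y + c) := by
  rw [← Real.sqrt_mul (quadratic_nonneg_of_discrim_neg ha hdisc x)]
  apply Real.lt_sqrt_of_sq_lt
  rw [discrim] at hdisc
  have hgap : 0 < (4 * a * c - b ^ 2) / 4 * (x - y) ^ 2 :=
    mul_pos (by linarith) (sq_pos_of_ne_zero (sub_ne_zero.2 hxy))
  linear_combination hgap

theorem strictConvexOn_sqrt_quadratic (ha : 0 < a) (hdisc : discrim a b c < 0) :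
    StrictConvexOn ℝ univ fun x ↦ √(a * x ^ 2 + b * x + c) := by
  refine ⟨convex_univ, fun x _ y _ hxy s t hs ht hst ↦ ?_⟩
  obtain rfl : t = 1 - s := by linarith
  have hQ := quadratic_nonneg_of_discrim_neg ha hdisc
  have hA := Real.sq_sqrt (hQ x)
  have hB := Real.sq_sqrt (hQ y)
  have hpolar := mul_lt_mul_of_pos_left (mul_add_lt_sqrt_mul_sqrt_of_discrim_neg ha hdisc hxy)
    (mul_pos hs ht)
  simp only [smul_eq_mul]
  refine (Real.sqrt_lt_sqrt (hQ _) ?_).trans_eq (Real.sqrt_sq (by positivity))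
  linear_combination 2 * hpolar - s ^ 2 * hA - (1 - s) ^ 2 * hB

end SqrtQuadratic

theorem mem_extremePoints_of_linearMap {𝕜 E F : Type*} [Semiring 𝕜] [PartialOrder 𝕜]
    [AddCommMonoid E] [Module 𝕜 E] [AddCommMonoid F] [Module 𝕜 F] {π : E →ₗ[𝕜] F} {A : Set E}
    {B : Set F} {x : E} (hx : x ∈ A) (hAB : MapsTo π A B) (hπx : π x ∈ B.extremePoints 𝕜)
    (hfiber : ∀ y ∈ A, π y = π x → y = x) : x ∈ A.extremePoints 𝕜 := by
  refine ⟨hx, fun x₁ hx₁ x₂ hx₂ hseg ↦ hfiber x₁ hx₁ ?_⟩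
  obtain ⟨a, b, ha, hb, hab, rfl⟩ := hseg
  exact hπx.2 (hAB hx₁) (hAB hx₂) ⟨a, b, ha, hb, hab, by rw [map_add, map_smul, map_smul]⟩

theorem ne_convexHull_of_infinite_extremePoints {𝕜 E : Type*} [Ring 𝕜] [LinearOrder 𝕜]
    [IsStrictOrderedRing 𝕜] [DenselyOrdered 𝕜] [AddCommGroup E] [Module 𝕜 E]
    [Module.IsTorsionFree 𝕜 E] {A F : Set E} (hA : (A.extremePoints 𝕜).Infinite) (hF : F.Finite) :
    A ≠ convexHull 𝕜 F := by
  rintro rfl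
  exact hA (hF.subset extremePoints_convexHull_subset)

theorem StrictConcaveOn.mk_mem_extremePoints_hypograph {E : Type*} [AddCommGroup E] [Module ℝ E]
    {s : Set E} {f : E → ℝ} (hf : StrictConcaveOn ℝ s f) {x : E} (hx : x ∈ s) :
    (x, f x) ∈ {p : E × ℝ | p.1 ∈ s ∧ p.2 ≤ f p.1}.extremePoints ℝ := by
  refine ⟨⟨hx, le_rfl⟩, ?_⟩
  rintro ⟨x₁, t₁⟩ ⟨hx₁, ht₁⟩ ⟨x₂, t₂⟩ ⟨hx₂, ht₂⟩ ⟨a, b, ha, hb, hab, hcomb⟩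
  simp only [Prod.smul_mk, Prod.mk_add_mk, Prod.mk.injEq, smul_eq_mul] at hcomb ht₁ ht₂
  obtain ⟨hxcomb, htcomb⟩ := hcomb
  have hx₁₂ : x₁ = x₂ := by
    by_contra hne
    have := hf.2 hx₁ hx₂ hne ha hb hab
    rw [hxcomb] at this
    simp only [smul_eq_mul] at this
    nlinarith [mul_le_mul_of_nonneg_left ht₁ ha.le, mul_le_mul_of_nonneg_left ht₂ hb.le]
  subst hx₁₂
  rw [← add_smul, hab, one_smul] at hxcomb
  subst hxcomb
  refine Prod.ext rfl (le_antisymm ht₁ (le_of_mul_le_mul_left ?_ ha))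
  linear_combination f x₁ * hab - htcomb + mul_le_mul_of_nonneg_left ht₂ hb.le

noncomputable def tBound (r : ℝ) : ℝ := 4 - 3 * r - √(9 * r ^ 2 - 15 * r + 7)

def Delta : Set (ℝ × ℝ × ℝ) :=
  {p | 0 ≤ p.1 ∧ p.1 ≤ 1 ∧ 0 ≤ p.2.1 ∧ p.2.1 ≤ tBound p.1 ∧
    0 ≤ p.2.2 ∧ p.2.2 ≤ 24 - 18 * p.1 - 6 * p.2.1}

theorem strictConcaveOn_tBound : StrictConcaveOn ℝ univ tBound := by
  have hsqrt := strictConvexOn_sqrt_quadratic (a := 9) (b := -15) (c := 7) (by norm_num)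
    (by norm_num [discrim])
  refine ⟨convex_univ, fun x _ y _ hxy s t hs ht hst ↦ ?_⟩
  have h := hsqrt.2 trivial trivial hxy hs ht hst
  simp only [smul_eq_mul, neg_mul, ← sub_eq_add_neg] at h ⊢
  unfold tBound
  linear_combination h + 4 * hst

@[fun_prop]
theorem continuous_tBound : Continuous tBound := by
  unfold tBound
  fun_prop

theorem tBound_le (r : ℝ) : tBound r ≤ 4 - 3 * r :=
  sub_le_self _ (Real.sqrt_nonneg _)

theorem tBound_nonneg {r : ℝ} (hr : r ≤ 1) : 0 ≤ tBound r := by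
  rw [tBound, sub_nonneg, Real.sqrt_le_left (by linarith)]
  nlinarith

theorem isCompact_Delta : IsCompact Delta := by
  have hclosed : IsClosed Delta := by
    simp only [Delta, ofPred_and]
    repeat' apply IsClosed.inter
    all_goals exact isClosed_le (by fun_prop) (by fun_prop)
  refine (isCompact_Icc (a := (0, 0, 0)) (b := (1, 4, 24))).of_isClosed_subset hclosed ?_
  rintro ⟨r, t, y⟩ ⟨hr₀, hr₁, ht₀, ht, hy₀, hy⟩
  have := tBound_le r
  exact ⟨⟨hr₀, ht₀, hy₀⟩, hr₁, by linarith, by linarith⟩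

theorem convex_Delta : Convex ℝ Delta := by
  rintro ⟨r₁, t₁, y₁⟩ ⟨hr₁, hr₁', ht₁, ht₁', hy₁, hy₁'⟩
    ⟨r₂, t₂, y₂⟩ ⟨hr₂, hr₂', ht₂, ht₂', hy₂, hy₂'⟩ a b ha hb hab
  have hconc := strictConcaveOn_tBound.concaveOn.2 (mem_univ r₁) (mem_univ r₂) ha hb hab
  simp only [Delta, mem_ofPred_eq, Prod.smul_mk, smul_eq_mul, Prod.mk_add_mk] at hconc ⊢
  refine ⟨by positivity, ?_, by positivity, ?_, by positivity, ?_⟩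
  · nlinarith
  · nlinarith [mul_le_mul_of_nonneg_left ht₁' ha, mul_le_mul_of_nonneg_left ht₂' hb]
  · nlinarith [mul_le_mul_of_nonneg_left hy₁' ha, mul_le_mul_of_nonneg_left hy₂' hb]

theorem mk_tBound_mem_extremePoints_Delta {r : ℝ} (hr : r ∈ Icc 0 1) :
    (r, tBound r, 0) ∈ Delta.extremePoints ℝ := by
  let π : ℝ × ℝ × ℝ →ₗ[ℝ] ℝ × ℝ :=
    LinearMap.id.prodMap (LinearMap.fst ℝ ℝ ℝ - LinearMap.snd ℝ ℝ ℝ)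
  have hgraph := (strictConcaveOn_tBound.subset (subset_univ _) (convex_Icc 0 1))
    |>.mk_mem_extremePoints_hypograph hr
  refine mem_extremePoints_of_linearMap (π := π) ?_ ?_ (by simpa [π] using hgraph) ?_
  · have := tBound_le r
    exact ⟨hr.1, hr.2, tBound_nonneg hr.2, le_rfl, le_rfl, by linarith⟩
  · rintro ⟨r', t', y'⟩ ⟨hr₀, hr₁, -, ht, hy, -⟩
    exact ⟨⟨hr₀, hr₁⟩, show t' - y' ≤ tBound r' by linarith⟩
  · rintro ⟨r', t', y'⟩ ⟨-, -, -, ht, hy, -⟩ hπ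
    obtain ⟨rfl, hty⟩ : r' = r ∧ t' - y' = tBound r := by simpa [π] using hπ
    obtain rfl : y' = 0 := by dsimp only at ht hy; linarith
    rw [← hty, sub_zero]

/-- The Okounkov body
`Δ = {(r, t, y) : 0 ≤ r ≤ 1, 0 ≤ t ≤ 4 - 3r - √(9r² - 15r + 7), 0 ≤ y ≤ 24 - 18r - 6t}`
is a compact convex body that is not the convex hull of any finite subset of `ℝ³`; in
particular an ample divisor on a Fano variety can have a non-polyhedral Okounkov body. -/
theorem Delta_not_polyhedral :
    IsCompact {p : ℝ × ℝ × ℝ | 0 ≤ p.1 ∧ p.1 ≤ 1 ∧ 0 ≤ p.2.1 ∧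
        p.2.1 ≤ 4 - 3 * p.1 - Real.sqrt (9 * p.1 ^ 2 - 15 * p.1 + 7) ∧
        0 ≤ p.2.2 ∧ p.2.2 ≤ 24 - 18 * p.1 - 6 * p.2.1} ∧
    Convex ℝ {p : ℝ × ℝ × ℝ | 0 ≤ p.1 ∧ p.1 ≤ 1 ∧ 0 ≤ p.2.1 ∧
        p.2.1 ≤ 4 - 3 * p.1 - Real.sqrt (9 * p.1 ^ 2 - 15 * p.1 + 7) ∧
        0 ≤ p.2.2 ∧ p.2.2 ≤ 24 - 18 * p.1 - 6 * p.2.1} ∧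
    ∀ F : Set (ℝ × ℝ × ℝ), F.Finite →
      {p : ℝ × ℝ × ℝ | 0 ≤ p.1 ∧ p.1 ≤ 1 ∧ 0 ≤ p.2.1 ∧
          p.2.1 ≤ 4 - 3 * p.1 - Real.sqrt (9 * p.1 ^ 2 - 15 * p.1 + 7) ∧
          0 ≤ p.2.2 ∧ p.2.2 ≤ 24 - 18 * p.1 - 6 * p.2.1} ≠ convexHull ℝ F := by
  change IsCompact Delta ∧ Convex ℝ Delta ∧ ∀ F : Set _, F.Finite → Delta ≠ convexHull ℝ F
  have hext : ((fun r ↦ (r, tBound r, (0 : ℝ))) '' Icc 0 1).Infinite :=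
    (Icc_infinite zero_lt_one).image fun _ _ _ _ h ↦ congrArg Prod.fst h
  exact ⟨isCompact_Delta, convex_Delta, fun F hF ↦ ne_convexHull_of_infinite_extremePoints
    (hext.mono (image_subset_iff.2 fun r hr ↦ mk_tBound_mem_extremePoints_Delta hr)) hF⟩
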